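/- arXiv:1502.05275 — 5 statements merged into one kernel-verified Lean document; each statement's English description precedes it below -/
import Mathlib

section
/- The number of bifix-free words of length n over a q-letter alphabet satisfies: |BF_1^q| = q, |BF_{2n+1}^q| = q·|BF_{2n}^q|, and |BF_{2n}^q| = q·|BF_{2n-1}^q| − |BF_n^q|. -/
def wordPref {α : Type*} {n : ℕ} (w : Fin n → α) (i : ℕ) (h : i ≤ n) : Fin i → α :=
  fun t => w (Fin.castLE h t)

def wordSuff {α : Type*} {n : ℕ} (w : Fin n → α) (i : ℕ) (h : i ≤ n) : Fin i → α :=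
  fun t => w ⟨n - i + t, by have := t.isLt; omega⟩

def BifixFree {α : Type*} {n : ℕ} (w : Fin n → α) : Prop :=
  ∀ (i : ℕ) (_ : 1 ≤ i) (h2 : i < n), wordPref w i h2.le ≠ wordSuff w i h2.le

/-- The number of bifix-free words of length `n` over a `q`-letter alphabet. -/
noncomputable def BFcard (q n : ℕ) : ℕ :=
  Nat.card {w : Fin n → Fin q // BifixFree w}

section Aux
variable {α : Type*}

lemma wcongr {n : ℕ} (w : Fin n → α) {a b : ℕ} (ha : a < n) (hb : b < n) (h : a = b) :
    w ⟨a, ha⟩ = w ⟨b, hb⟩ := by subst h; rfl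

/-- `w` has a border of length `i`. -/
def Brd {n : ℕ} (w : Fin n → α) (i : ℕ) (h : i ≤ n) : Prop :=
  ∀ j : ℕ, ∀ _ : j < i, w ⟨j, by omega⟩ = w ⟨n - i + j, by omega⟩

lemma brd_iff {n : ℕ} (w : Fin n → α) (i : ℕ) (h : i ≤ n) :
    wordPref w i h = wordSuff w i h ↔ Brd w i h := by
  constructor
  · intro he j hj
    exact congrFun he ⟨j, hj⟩
  · intro hb
    funext t
    exact hb t t.isLt

lemma bifixFree_iff {n : ℕ} (w : Fin n → α) :
    BifixFree w ↔ ∀ i, 1 ≤ i → ∀ h2 : i < n, ¬ Brd w i h2.le := by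
  unfold BifixFree
  refine forall_congr' fun i => forall_congr' fun h1 => forall_congr' fun h2 => ?_
  exact not_congr (brd_iff w i h2.le)

lemma brd_halve {n : ℕ} (w : Fin n → α) (i : ℕ) (h : i ≤ n) (hn : n < 2 * i)
    (hb : Brd w i h) : Brd w (2 * i - n) (by omega) := by
  intro j hj
  have h1 := hb j (by omega)
  have h2 := hb (n - i + j) (by omega)
  refine h1.trans (h2.trans (wcongr w _ _ (by omega)))

lemma exists_short_brd {n : ℕ} (w : Fin n → α) :
    ∀ i, 1 ≤ i → ∀ hlt : i < n, Brd w i hlt.le →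
      ∃ i', ∃ h : 1 ≤ i' ∧ 2 * i' ≤ n, Brd w i' (by omega) := by
  intro i
  induction i using Nat.strong_induction_on with
  | _ i ih =>
    intro h1 hlt hb
    by_cases hs : 2 * i ≤ n
    · exact ⟨i, ⟨h1, hs⟩, hb⟩
    · have h2 := brd_halve w i hlt.le (by omega) hb
      exact ih (2 * i - n) (by omega) (by omega) (by omega) h2

lemma bifixFree_iff_short {n : ℕ} (w : Fin n → α) :
    BifixFree w ↔ ∀ i, 1 ≤ i → ∀ _ : 2 * i ≤ n, ¬ Brd w i (by omega) := by
  rw [bifixFree_iff]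
  constructor
  · intro H i h1 h2 hb
    exact H i h1 (by omega) hb
  · intro H i h1 h2 hb
    obtain ⟨i', ⟨h1', hs⟩, hb'⟩ := exists_short_brd w i h1 h2 hb
    exact H i' h1' hs hb'

def delAt {k p : ℕ} (hp : p ≤ k) (w : Fin (k + 1) → α) : Fin k → α :=
  fun j => if h : (j : ℕ) < p then w ⟨j, by omega⟩ else w ⟨(j : ℕ) + 1, by have := j.isLt; omega⟩

def insAt {k p : ℕ} (hp : p ≤ k) (x : α) (v : Fin k → α) : Fin (k + 1) → α :=
  fun j => if h : (j : ℕ) < p then v ⟨j, by omega⟩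
    else if h2 : (j : ℕ) = p then x else v ⟨(j : ℕ) - 1, by have := j.isLt; omega⟩

lemma delAt_lt {k p : ℕ} (hp : p ≤ k) (w : Fin (k + 1) → α) (j : Fin k) (h : (j : ℕ) < p) :
    delAt hp w j = w ⟨j, by omega⟩ := by
  simp only [delAt]; rw [dif_pos h]

lemma delAt_ge {k p : ℕ} (hp : p ≤ k) (w : Fin (k + 1) → α) (j : Fin k) (h : p ≤ (j : ℕ)) :
    delAt hp w j = w ⟨(j : ℕ) + 1, by have := j.isLt; omega⟩ := by
  simp only [delAt]; rw [dif_neg (by omega)]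

lemma insAt_lt {k p : ℕ} (hp : p ≤ k) (x : α) (v : Fin k → α) (j : Fin (k + 1))
    (h : (j : ℕ) < p) : insAt hp x v j = v ⟨j, by omega⟩ := by
  simp only [insAt]; rw [dif_pos h]

lemma insAt_eq {k p : ℕ} (hp : p ≤ k) (x : α) (v : Fin k → α) (j : Fin (k + 1))
    (h : (j : ℕ) = p) : insAt hp x v j = x := by
  simp only [insAt]; rw [dif_neg (by omega), dif_pos h]

lemma insAt_gt {k p : ℕ} (hp : p ≤ k) (x : α) (v : Fin k → α) (j : Fin (k + 1))
    (h : p < (j : ℕ)) : insAt hp x v j = v ⟨(j : ℕ) - 1, by have := j.isLt; omega⟩ := by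
  simp only [insAt]; rw [dif_neg (by omega), dif_neg (by omega)]

lemma delAt_insAt {k p : ℕ} (hp : p ≤ k) (x : α) (v : Fin k → α) :
    delAt hp (insAt hp x v) = v := by
  funext j
  rcases Nat.lt_or_ge (j : ℕ) p with h | h
  · rw [delAt_lt hp _ j h, insAt_lt hp x v _ h]
  · rw [delAt_ge hp _ j h, insAt_gt hp x v _ (by simp only [Fin.val_mk]; omega)]
    exact wcongr v _ _ (by simp only [Fin.val_mk]; omega)

lemma insAt_delAt {k p : ℕ} (hp : p ≤ k) (w : Fin (k + 1) → α) :
    insAt hp (w ⟨p, by omega⟩) (delAt hp w) = w := by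
  funext j
  rcases Nat.lt_trichotomy (j : ℕ) p with h | h | h
  · rw [insAt_lt hp _ _ j h, delAt_lt hp w _ (by simp only [Fin.val_mk]; exact h)]
  · rw [insAt_eq hp _ _ j h]
    exact wcongr w _ _ h.symm
  · rw [insAt_gt hp _ _ j h, delAt_ge hp w _ (by simp only [Fin.val_mk]; omega)]
    exact wcongr w _ _ (by simp only [Fin.val_mk]; omega)

lemma brd_delAt {k p : ℕ} (hp : p ≤ k) (w : Fin (k + 1) → α) (i : ℕ)
    (hip : i ≤ p) (hik : i ≤ k - p) :
    Brd (delAt hp w) i (by omega) ↔ Brd w i (by omega) := by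
  constructor
  · intro hb j hj
    have h1 := hb j hj
    rw [delAt_lt hp w _ (by simp only [Fin.val_mk]; omega),
      delAt_ge hp w _ (by simp only [Fin.val_mk]; omega)] at h1
    exact h1.trans (wcongr w _ _ (by simp only [Fin.val_mk]; omega))
  · intro hb j hj
    rw [delAt_lt hp w _ (by simp only [Fin.val_mk]; omega),
      delAt_ge hp w _ (by simp only [Fin.val_mk]; omega)]
    exact (hb j hj).trans (wcongr w _ _ (by simp only [Fin.val_mk]; omega))

def prodSub {β : Type*} (q : ℕ) (Q : β → Prop) : {p : Fin q × β // Q p.2} ≃ Fin q × {b // Q b} :=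
  ⟨fun p => (p.1.1, ⟨p.1.2, p.2⟩), fun x => ⟨(x.1, x.2.1), x.2.2⟩, fun _ => rfl, fun _ => rfl⟩

lemma card_insAt {k p q : ℕ} (hp : p ≤ k)
    (C : (Fin (k + 1) → Fin q) → Prop) (D : (Fin k → Fin q) → Prop)
    (hCD : ∀ w, C w ↔ D (delAt hp w)) :
    Nat.card {w // C w} = q * Nat.card {v // D v} := by
  have e : {w : Fin (k + 1) → Fin q // C w} ≃ Fin q × {v : Fin k → Fin q // D v} :=
    { toFun := fun w => (w.1 ⟨p, by omega⟩, ⟨delAt hp w.1, (hCD w.1).mp w.2⟩)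
      invFun := fun xv => ⟨insAt hp xv.1 xv.2.1,
        (hCD _).mpr (by rw [delAt_insAt]; exact xv.2.2)⟩
      left_inv := fun w => Subtype.ext (insAt_delAt hp w.1)
      right_inv := fun xv => by
        refine Prod.ext (insAt_eq hp _ _ _ rfl) (Subtype.ext ?_)
        exact delAt_insAt hp _ _ }
  rw [Nat.card_congr e, Nat.card_prod]
  simp [Nat.card_eq_fintype_card]

end Aux

section Even
variable {q m : ℕ}

def prefW (m q : ℕ) (w : Fin (2 * m + 2) → Fin q) : Fin (m + 1) → Fin q :=
  fun t => w ⟨t, by have := t.isLt; omega⟩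

def dblW (m q : ℕ) (u : Fin (m + 1) → Fin q) : Fin (2 * m + 2) → Fin q :=
  fun j => if h : (j : ℕ) < m + 1 then u ⟨j, h⟩
    else u ⟨(j : ℕ) - (m + 1), by have := j.isLt; omega⟩

def AP (m q : ℕ) (w : Fin (2 * m + 2) → Fin q) : Prop :=
  ∀ i, 1 ≤ i → ∀ _ : i ≤ m, ¬ Brd w i (by omega)

def BP (m q : ℕ) (w : Fin (2 * m + 2) → Fin q) : Prop :=
  Brd w (m + 1) (by omega)

lemma f1 (u : Fin (m + 1) → Fin q) : BP m q (dblW m q u) := by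
  intro j hj
  unfold dblW
  rw [dif_pos (by simp only [Fin.val_mk]; omega), dif_neg (by simp only [Fin.val_mk]; omega)]
  exact wcongr u _ _ (by simp only [Fin.val_mk]; omega)

lemma f2 (u : Fin (m + 1) → Fin q) : prefW m q (dblW m q u) = u := by
  funext t
  show dblW m q u ⟨(t : ℕ), _⟩ = u t
  unfold dblW
  rw [dif_pos (by simp only [Fin.val_mk]; exact t.isLt)]

lemma f3 (w : Fin (2 * m + 2) → Fin q) (hBw : BP m q w) : dblW m q (prefW m q w) = w := by
  funext j
  have hj2 := j.isLt
  unfold dblW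
  by_cases h : (j : ℕ) < m + 1
  · rw [dif_pos h]
    exact wcongr w _ _ (by simp only [Fin.val_mk])
  · rw [dif_neg h]
    have h4 := hBw ((j : ℕ) - (m + 1)) (by omega)
    exact h4.trans (wcongr w _ j.isLt (by omega))

lemma brd_prefW (w : Fin (2 * m + 2) → Fin q) (hBw : BP m q w) (i : ℕ) (h1 : 1 ≤ i)
    (h2 : i ≤ m) : Brd (prefW m q w) i (by omega) ↔ Brd w i (by omega) := by
  constructor
  · intro hb j hj
    have h3 := hb j hj
    have h4 := hBw (m + 1 - i + j) (by omega)
    exact h3.trans (h4.trans (wcongr w _ _ (by omega)))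
  · intro hb j hj
    have h3 := hb j hj
    have h4 := hBw (m + 1 - i + j) (by omega)
    exact h3.trans ((wcongr w _ _ (by omega : (2 * m + 2) - i + j
        = 2 * m + 2 - (m + 1) + (m + 1 - i + j))).trans h4.symm)

lemma hfwd (w : Fin (2 * m + 2) → Fin q) (hAw : AP m q w) (hBw : BP m q w) :
    BifixFree (prefW m q w) := by
  rw [bifixFree_iff]
  intro i h1 h2
  rw [brd_prefW w hBw i h1 (by omega)]
  exact hAw i h1 (by omega)

lemma hbwd (u : Fin (m + 1) → Fin q) (hu : BifixFree u) :
    AP m q (dblW m q u) ∧ BP m q (dblW m q u) := by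
  refine ⟨?_, f1 u⟩
  intro i h1 h2
  have h3 := (brd_prefW (dblW m q u) (f1 u) i h1 h2).symm
  rw [f2 u] at h3
  rw [h3]
  exact (bifixFree_iff u).mp hu i h1 (by omega)

end Even

theorem stmt_1 (q : ℕ) (hq : 2 ≤ q) :
    BFcard q 1 = q ∧
    (∀ n : ℕ, 1 ≤ n → BFcard q (2 * n + 1) = q * BFcard q (2 * n)) ∧
    (∀ n : ℕ, 1 ≤ n → BFcard q (2 * n) = q * BFcard q (2 * n - 1) - BFcard q n) := by
  refine ⟨?_, ?_, ?_⟩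
  · -- length 1
    have hall : ∀ w : Fin 1 → Fin q, BifixFree w := by
      intro w i h1 h2
      exact absurd h1 (by omega)
    unfold BFcard
    rw [Nat.card_congr ((Equiv.subtypeUnivEquiv hall).trans (Equiv.funUnique (Fin 1) (Fin q)))]
    simp [Nat.card_eq_fintype_card]
  · -- odd case
    intro n _
    have hp : n ≤ 2 * n := by omega
    have key : ∀ w : Fin (2 * n + 1) → Fin q, BifixFree w ↔ BifixFree (delAt hp w) := by
      intro w
      rw [bifixFree_iff_short, bifixFree_iff_short]
      constructor
      · intro H i h1 h2
        rw [brd_delAt hp w i (by omega) (by omega)]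
        exact H i h1 (by omega)
      · intro H i h1 h2
        have h3 := H i h1 (by omega)
        rw [brd_delAt hp w i (by omega) (by omega)] at h3
        exact h3
    exact card_insAt (k := 2 * n) (p := n) hp BifixFree BifixFree key
  · -- even case
    intro n hn
    obtain ⟨m, rfl⟩ : ∃ m, n = m + 1 := ⟨n - 1, by omega⟩
    show BFcard q (2 * m + 2) = q * BFcard q (2 * m + 1) - BFcard q (m + 1)
    have hp : m + 1 ≤ 2 * m + 1 := by omega
    have hAD : ∀ w : Fin (2 * m + 1 + 1) → Fin q, AP m q w ↔ BifixFree (delAt hp w) := by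
      intro w
      rw [bifixFree_iff_short]
      constructor
      · intro H i h1 h2
        rw [brd_delAt hp w i (by omega) (by omega)]
        exact H i h1 (by omega)
      · intro H i h1 h2
        have h3 := H i h1 (by omega)
        rw [brd_delAt hp w i (by omega) (by omega)] at h3
        exact h3
    have step1 : Nat.card {w : Fin (2 * m + 2) → Fin q // AP m q w} =
        q * BFcard q (2 * m + 1) :=
      card_insAt (k := 2 * m + 1) (p := m + 1) hp (AP m q) BifixFree hAD
    classical
    have split : {w : Fin (2 * m + 2) → Fin q // AP m q w} ≃
        {w : Fin (2 * m + 2) → Fin q // AP m q w ∧ ¬ BP m q w} ⊕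
        {w : Fin (2 * m + 2) → Fin q // AP m q w ∧ BP m q w} :=
      { toFun := fun w => if h : BP m q w.1 then .inr ⟨w.1, w.2, h⟩ else .inl ⟨w.1, w.2, h⟩
        invFun := fun s => match s with
          | .inl y => ⟨y.1, y.2.1⟩
          | .inr y => ⟨y.1, y.2.1⟩
        left_inv := fun w => by
          by_cases h : BP m q w.1 <;> simp [h]
        right_inv := fun s => by
          rcases s with y | y
          · simp [y.2.2]
          · simp [y.2.2] }
    have eqvA : {w : Fin (2 * m + 2) → Fin q // AP m q w ∧ ¬ BP m q w} ≃
        {w : Fin (2 * m + 2) → Fin q // BifixFree w} := by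
      refine Equiv.subtypeEquivRight fun w => ?_
      rw [bifixFree_iff_short]
      constructor
      · rintro ⟨hAw, hBw⟩ i h1 h2
        rcases Nat.lt_or_ge i (m + 1) with h | h
        · exact hAw i h1 (by omega)
        · have hi : i = m + 1 := by omega
          subst hi
          exact hBw
      · intro H
        exact ⟨fun i h1 h2 => H i h1 (by omega), H (m + 1) (by omega) (by omega)⟩
    have eqvB : {w : Fin (2 * m + 2) → Fin q // AP m q w ∧ BP m q w} ≃
        {u : Fin (m + 1) → Fin q // BifixFree u} :=
      { toFun := fun w => ⟨prefW m q w.1, hfwd w.1 w.2.1 w.2.2⟩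
        invFun := fun u => ⟨dblW m q u.1, hbwd u.1 u.2⟩
        left_inv := fun w => Subtype.ext (f3 w.1 w.2.2)
        right_inv := fun u => Subtype.ext (f2 u.1) }
    have step2 : Nat.card {w : Fin (2 * m + 2) → Fin q // AP m q w} =
        BFcard q (2 * m + 2) + BFcard q (m + 1) := by
      rw [Nat.card_congr split, Nat.card_sum, Nat.card_congr eqvA, Nat.card_congr eqvB]
      rfl
    omega
end

section
/- Let A be a cross-bifix-free set of words of length n over a q-letter alphabet Σ. Then the set of all n × n matrices whose main diagonal is a word of A and whose off-diagonal entries are arbitrary elements of Σ is a cross-bibifix-free set of matrices. -/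
/-- A set of length-`n` words is cross-bifix-free if every word in it is bifix-free and for
any two distinct words no nonempty proper prefix of one equals the same-length suffix of
the other. -/
def CrossBifixFreeSet {α : Type*} {n : ℕ} (A : Set (Fin n → α)) : Prop :=
  (∀ w ∈ A, BifixFree w) ∧
  ∀ w ∈ A, ∀ w' ∈ A, w ≠ w' →
    ∀ (i : ℕ) (_ : 1 ≤ i) (h2 : i < n), wordPref w i h2.le ≠ wordSuff w' i h2.le

def topLeft {α : Type*} {n : ℕ} (T : Matrix (Fin n) (Fin n) α) (r : ℕ) (h : r ≤ n) :
    Matrix (Fin r) (Fin r) α :=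
  fun a b => T (Fin.castLE h a) (Fin.castLE h b)

def botRight {α : Type*} {n : ℕ} (T : Matrix (Fin n) (Fin n) α) (r : ℕ) (h : r ≤ n) :
    Matrix (Fin r) (Fin r) α :=
  fun a b => T ⟨n - r + a, by have := a.isLt; omega⟩ ⟨n - r + b, by have := b.isLt; omega⟩

def BibifixFree {α : Type*} {n : ℕ} (T : Matrix (Fin n) (Fin n) α) : Prop :=
  ∀ (r : ℕ) (_ : 1 ≤ r) (h2 : r < n), topLeft T r h2.le ≠ botRight T r h2.le

/-- A set of `n × n` matrices is cross-bibifix-free if every matrix in it is bibifix-free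
and for any two distinct matrices no biprefix of one equals the same-size bisuffix of the
other. -/
def CrossBibifixFreeSet {α : Type*} {n : ℕ} (S : Set (Matrix (Fin n) (Fin n) α)) : Prop :=
  (∀ T ∈ S, BibifixFree T) ∧
  ∀ T ∈ S, ∀ T' ∈ S, T ≠ T' →
    ∀ (r : ℕ) (_ : 1 ≤ r) (h2 : r < n), topLeft T r h2.le ≠ botRight T' r h2.le

theorem stmt_11 {n q : ℕ} (A : Set (Fin n → Fin q)) (hA : CrossBifixFreeSet A) :
    CrossBibifixFreeSet {T : Matrix (Fin n) (Fin n) (Fin q) | Matrix.diag T ∈ A} := by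
  have key : ∀ (T T' : Matrix (Fin n) (Fin n) (Fin q)) (r : ℕ) (h : r ≤ n),
      topLeft T r h = botRight T' r h →
      wordPref (Matrix.diag T) r h = wordSuff (Matrix.diag T') r h := by
    intro T T' r h heq
    funext t
    have := congrFun (congrFun heq t) t
    simpa [topLeft, botRight, wordPref, wordSuff, Matrix.diag] using this
  constructor
  · intro T hT r hr h2 heq
    by_cases hdd : Matrix.diag T = Matrix.diag T
    · exact hA.1 _ hT r hr h2 (by simpa using key T T r h2.le heq)
    · exact hdd rfl
  · intro T hT T' hT' hne r hr h2 heq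
    have hk := key T T' r h2.le heq
    by_cases hdd : Matrix.diag T = Matrix.diag T'
    · exact hA.1 _ hT r hr h2 (hdd ▸ hk)
    · exact hA.2 _ hT _ hT' hdd r hr h2 hk
end

section
/- For n ≥ 3 and 1 ≤ k ≤ n−2, the set S_{n,2}^{(k)} of binary words s of length n satisfying s[1] = ... = s[k] = 1, s[k+1] = 0, s[n] = 0, and the factor s[k+2]...s[n−1] contains no run of k consecutive 1s, is a cross-bifix-free set: every word in it is bifix-free and no nonempty proper prefix of one word equals a same-length suffix of another. -/
/-- The set `S_{n,2}^{(k)}`: binary words `s` of length `n` (0-indexed) with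
`s[0] = ⋯ = s[k-1] = 1`, `s[k] = 0`, `s[n-1] = 0`, and the factor
`s[k+1] … s[n-2]` containing no `k` consecutive `1`s. -/
def Snk2 (n k : ℕ) : Set (Fin n → Fin 2) :=
  {w | (∀ i : Fin n, (i : ℕ) < k → w i = 1) ∧
       (∀ i : Fin n, (i : ℕ) = k → w i = 0) ∧
       (∀ i : Fin n, (i : ℕ) = n - 1 → w i = 0) ∧
       (∀ j : ℕ, k + 1 ≤ j → j + k ≤ n - 1 →
         ∃ t, ∃ _ : t < k, ∀ h : j + t < n, w ⟨j + t, h⟩ = 0)}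


lemma snk2_key (n k : ℕ) (hn : 3 ≤ n) (hk1 : 1 ≤ k) (hk2 : k ≤ n - 2)
    (w w' : Fin n → Fin 2) (hw : w ∈ Snk2 n k) (hw' : w' ∈ Snk2 n k)
    (i : ℕ) (hi1 : 1 ≤ i) (h2 : i < n) : wordPref w i h2.le ≠ wordSuff w' i h2.le := by
  obtain ⟨h1, h0, hlast, hnorun⟩ := hw
  obtain ⟨h1', h0', hlast', hnorun'⟩ := hw'
  intro heq
  have heq' : ∀ t : ℕ, ∀ ht : t < i, w ⟨t, by omega⟩ = w' ⟨n - i + t, by omega⟩ := by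
    intro t ht
    have := congrFun heq ⟨t, ht⟩
    simpa [wordPref, wordSuff, Fin.castLE] using this
  by_cases hik : i ≤ k
  · have e1 : w ⟨i - 1, by omega⟩ = 1 := h1 _ (by simp; omega)
    have e2 : w' ⟨n - i + (i - 1), by omega⟩ = 0 := hlast' _ (by simp; omega)
    have := heq' (i - 1) (by omega)
    rw [e1, e2] at this
    exact absurd this (by decide)
  · push_neg at hik
    have hrun : ∀ t : ℕ, t < k → ∀ hh : n - i + t < n, w' ⟨n - i + t, hh⟩ = 1 := by
      intro t ht hh
      have e1 : w ⟨t, by omega⟩ = 1 := h1 _ (by simpa using ht)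
      have := heq' t (by omega)
      rw [e1] at this
      exact this.symm
    by_cases hj : n - i ≤ k
    · have e2 : w' ⟨k, by omega⟩ = 0 := h0' _ rfl
      have e3 := hrun (k - (n - i)) (by omega) (by omega)
      have e4 : (⟨n - i + (k - (n - i)), by omega⟩ : Fin n) = ⟨k, by omega⟩ := by
        ext; simp; omega
      rw [e4, e2] at e3
      exact absurd e3 (by decide)
    · push_neg at hj
      obtain ⟨t, ht, hzero⟩ := hnorun' (n - i) (by omega) (by omega)
      have := hrun t ht (by omega)
      rw [hzero (by omega)] at this
      exact absurd this (by decide)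

theorem stmt_13 (n k : ℕ) (hn : 3 ≤ n) (hk1 : 1 ≤ k) (hk2 : k ≤ n - 2) :
    CrossBifixFreeSet (Snk2 n k) := by
  constructor
  · intro w hw i hi1 h2
    exact snk2_key n k hn hk1 hk2 w w hw hw i hi1 h2
  · intro w hw w' hw' _ i hi1 h2
    exact snk2_key n k hn hk1 hk2 w w' hw hw' i hi1 h2
end

section
/- For q ≥ 2, n ≥ 3 and 1 ≤ k ≤ n−2, the set S_{n,q}^{(k)} of q-ary words s of length n satisfying s[1] = ... = s[k] = 1, s[k+1] ≠ 1, s[n] ≠ 1, and the factor s[k+2]...s[n−1] containing no k consecutive 1s, is a cross-bifix-free set. -/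
/-- The set `S_{n,q}^{(k)}`: `q`-ary words `s` of length `n` (0-indexed) with
`s[0] = ⋯ = s[k-1] = 1`, `s[k] ≠ 1`, `s[n-1] ≠ 1`, and the factor
`s[k+1] … s[n-2]` containing no `k` consecutive `1`s. -/
def Snkq (q n k : ℕ) (hq : 2 ≤ q) : Set (Fin n → Fin q) :=
  {w | (∀ i : Fin n, (i : ℕ) < k → w i = ⟨1, by omega⟩) ∧
       (∀ i : Fin n, (i : ℕ) = k → w i ≠ ⟨1, by omega⟩) ∧
       (∀ i : Fin n, (i : ℕ) = n - 1 → w i ≠ ⟨1, by omega⟩) ∧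
       (∀ j : ℕ, k + 1 ≤ j → j + k ≤ n - 1 →
         ∃ t, ∃ _ : t < k, ∀ h : j + t < n, w ⟨j + t, h⟩ ≠ ⟨1, by omega⟩)}

lemma key_cross (q n k : ℕ) (hq : 2 ≤ q) (hn : 3 ≤ n) (hk1 : 1 ≤ k) (hk2 : k ≤ n - 2)
    (w w' : Fin n → Fin q) (hw : w ∈ Snkq q n k hq) (hw' : w' ∈ Snkq q n k hq)
    (i : ℕ) (hi1 : 1 ≤ i) (h2 : i < n) : wordPref w i h2.le ≠ wordSuff w' i h2.le := by
  obtain ⟨hw1, hw2, hw3, hw4⟩ := hw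
  obtain ⟨hv1, hv2, hv3, hv4⟩ := hw'
  intro heq
  have hpt : ∀ t : ℕ, (ht : t < i) → w ⟨t, by omega⟩ = w' ⟨n - i + t, by omega⟩ := by
    intro t ht
    have := congrFun heq ⟨t, ht⟩
    simpa [wordPref, wordSuff, Fin.castLE] using this
  by_cases hik : i ≤ k
  · have h1 : w ⟨i - 1, by omega⟩ = ⟨1, by omega⟩ :=
      hw1 ⟨i - 1, by omega⟩ (show i - 1 < k by omega)
    have h2' : w' ⟨n - i + (i - 1), by omega⟩ ≠ ⟨1, by omega⟩ :=
      hv3 ⟨n - i + (i - 1), by omega⟩ (show n - i + (i - 1) = n - 1 by omega)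
    exact h2' ((hpt (i - 1) (by omega)).symm.trans h1)
  · push_neg at hik
    have hones : ∀ t : ℕ, (ht : t < k) → w' ⟨n - i + t, by omega⟩ = ⟨1, by omega⟩ := by
      intro t ht
      rw [← hpt t (by omega)]
      exact hw1 ⟨t, by omega⟩ (show t < k from ht)
    by_cases hj : n - i ≤ k
    · have hne := hv2 ⟨k, by omega⟩ (show (k : ℕ) = k from rfl)
      have h1 := hones (k - (n - i)) (by omega)
      apply hne
      have hfin : (⟨n - i + (k - (n - i)), by omega⟩ : Fin n) = ⟨k, by omega⟩ :=
        Fin.ext (show n - i + (k - (n - i)) = k by omega)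
      rw [← hfin]
      exact h1
    · push_neg at hj
      obtain ⟨t, ht, hne⟩ := hv4 (n - i) (by omega) (by omega)
      exact hne (by omega) (hones t ht)

theorem stmt_16 (q n k : ℕ) (hq : 2 ≤ q) (hn : 3 ≤ n) (hk1 : 1 ≤ k) (hk2 : k ≤ n - 2) :
    CrossBifixFreeSet (Snkq q n k hq) := by
  refine ⟨fun w hw i hi1 h2 => key_cross q n k hq hn hk1 hk2 w w hw hw i hi1 h2,
    fun w hw w' hw' _ i hi1 h2 => key_cross q n k hq hn hk1 hk2 w w' hw hw' i hi1 h2⟩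
end

section
/- Let n ≥ 3, q ≥ 2, and S_n^q be the cross-bifix-free set S_{n,q}^{(k)} for some 1 ≤ k ≤ n−2. Then the set CBBF_n^q of all n × n matrices over Σ = {0,...,q−1} whose main diagonal belongs to S_n^q, with arbitrary off-diagonal entries, is a non-expandable cross-bibifix-free set on BBF_n^q. -/
section Aux
variable {q n : ℕ}

lemma Snkq_zero (hq : 2 ≤ q) {w : Fin n → Fin q} (hw : w ∈ Snkq q n 1 hq)
    (i : Fin n) (hi : (i : ℕ) = 0) : w i = ⟨1, by omega⟩ :=
  hw.1 i (by omega)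

lemma Snkq_ne_one (hq : 2 ≤ q) {w : Fin n → Fin q} (hw : w ∈ Snkq q n 1 hq)
    (i : Fin n) (hi : 1 ≤ (i : ℕ)) : w i ≠ ⟨1, by omega⟩ := by
  obtain ⟨c1, c2, c3, c4⟩ := hw
  rcases eq_or_ne (i : ℕ) 1 with h1 | h1
  · exact c2 i h1
  rcases eq_or_ne (i : ℕ) (n - 1) with h2 | h2
  · exact c3 i h2
  have hi2 : 2 ≤ (i : ℕ) := by omega
  have hlt := i.isLt
  obtain ⟨t, ht, hval⟩ := c4 (i : ℕ) (by omega) (by omega)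
  have ht0 : t = 0 := by omega
  subst ht0
  have : i = ⟨(i : ℕ) + 0, by omega⟩ := by ext; simp
  rw [this]
  exact hval _

lemma mem_Snkq_of (hq : 2 ≤ q) (hn : 3 ≤ n) {w : Fin n → Fin q}
    (h0 : ∀ i : Fin n, (i : ℕ) = 0 → w i = ⟨1, by omega⟩)
    (h1 : ∀ i : Fin n, 1 ≤ (i : ℕ) → w i ≠ ⟨1, by omega⟩) :
    w ∈ Snkq q n 1 hq := by
  refine ⟨fun i hi => h0 i (by omega), fun i hi => h1 i (by omega),
    fun i hi => h1 i (by omega), fun j hj hjn => ⟨0, by omega, fun h => h1 _ (by simp; omega)⟩⟩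

lemma key_cross_s17 (hq : 2 ≤ q) (hn : 3 ≤ n) {T T' : Matrix (Fin n) (Fin n) (Fin q)}
    (hT : Matrix.diag T ∈ Snkq q n 1 hq) (hT' : Matrix.diag T' ∈ Snkq q n 1 hq)
    (r : ℕ) (h1 : 1 ≤ r) (h2 : r < n) : topLeft T r h2.le ≠ botRight T' r h2.le := by
  intro heq
  have h := congrFun (congrFun heq ⟨0, h1⟩) ⟨0, h1⟩
  have hL : topLeft T r h2.le ⟨0, h1⟩ ⟨0, h1⟩ = Matrix.diag T ⟨0, by omega⟩ := rfl
  have hR : botRight T' r h2.le ⟨0, h1⟩ ⟨0, h1⟩ = Matrix.diag T' ⟨n - r, by omega⟩ := by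
    show T' ⟨n - r + 0, _⟩ ⟨n - r + 0, _⟩ = _
    congr 1 <;> ext <;> simp
  rw [hL, hR] at h
  exact Snkq_ne_one hq hT' ⟨n - r, by omega⟩ (by simp; omega)
    (h ▸ Snkq_zero hq hT ⟨0, by omega⟩ rfl)

end Aux

theorem stmt_17 (q n : ℕ) (hq : 2 ≤ q) (hn : 3 ≤ n) :
    ∃ k, 1 ≤ k ∧ k ≤ n - 2 ∧
      CrossBibifixFreeSet
        {T : Matrix (Fin n) (Fin n) (Fin q) | Matrix.diag T ∈ Snkq q n k hq} ∧
      ∀ M : Matrix (Fin n) (Fin n) (Fin q), BibifixFree M →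
        Matrix.diag M ∉ Snkq q n k hq →
        ¬ CrossBibifixFreeSet
            (insert M {T : Matrix (Fin n) (Fin n) (Fin q) | Matrix.diag T ∈ Snkq q n k hq}) := by
  classical
  refine ⟨1, le_rfl, by omega, ⟨fun T hT r h1 h2 => key_cross_s17 hq hn hT hT r h1 h2,
    fun T hT T' hT' _ r h1 h2 => key_cross_s17 hq hn hT hT' r h1 h2⟩, ?_⟩
  intro M _hM hdiag hC
  set S := {T : Matrix (Fin n) (Fin n) (Fin q) | Matrix.diag T ∈ Snkq q n 1 hq} with hS
  by_cases hB : ∃ j : Fin n, 1 ≤ (j : ℕ) ∧ M j j = ⟨1, by omega⟩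
  · -- Case B: some diagonal entry with index ≥ 1 equals 1; take the greatest such.
    set P : ℕ → Prop := fun j => 1 ≤ j ∧ ∀ h : j < n, M ⟨j, h⟩ ⟨j, h⟩ = ⟨1, by omega⟩ with hP
    obtain ⟨j₀, hj₀1, hj₀v⟩ := hB
    have hPj₀ : P (j₀ : ℕ) := ⟨hj₀1, fun h => by
      have : (⟨(j₀ : ℕ), h⟩ : Fin n) = j₀ := by ext; rfl
      rw [this]; exact hj₀v⟩
    set j := Nat.findGreatest P (n - 1) with hj
    have hPj : P j := Nat.findGreatest_spec (by have := j₀.isLt; omega) hPj₀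
    have hjle : j ≤ n - 1 := Nat.findGreatest_le _
    have hj1 : 1 ≤ j := hPj.1
    have hmax : ∀ m, j < m → m ≤ n - 1 → ¬ P m := fun m hm hmb =>
      Nat.findGreatest_is_greatest hm hmb
    set r := n - j with hr
    have hr1 : 1 ≤ r := by omega
    have hrn : r < n := by omega
    set T : Matrix (Fin n) (Fin n) (Fin q) := fun a b =>
      if h : (a : ℕ) < r ∧ (b : ℕ) < r then
        M ⟨j + a, by omega⟩ ⟨j + b, by omega⟩ else ⟨0, by omega⟩ with hTdef
    have hTmem : Matrix.diag T ∈ Snkq q n 1 hq := by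
      refine mem_Snkq_of hq hn (fun i hi => ?_) (fun i hi => ?_)
      · show T i i = _
        rw [hTdef]
        beta_reduce
        have : (i : ℕ) < r := by omega
        simp only [this, and_self, dif_pos]
        have : (⟨j + (i : ℕ), by omega⟩ : Fin n) = ⟨j, by omega⟩ := by ext; simp; omega
        rw [this]
        exact hPj.2 _
      · show T i i ≠ _
        rw [hTdef]
        beta_reduce
        by_cases hir : (i : ℕ) < r
        · simp only [hir, and_self, dif_pos]
          intro hcon
          exact hmax (j + i) (by omega) (by omega) ⟨by omega, fun h => by
            have : (⟨j + (i : ℕ), h⟩ : Fin n) = ⟨j + (i : ℕ), by omega⟩ := rfl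
            rw [this]; exact hcon⟩
        · simp only [hir, false_and, dif_neg, not_false_iff]
          intro hcon
          have := congrArg Fin.val hcon
          simp at this
    have hTne : T ≠ M := fun h => hdiag (h ▸ hTmem)
    have hcross := hC.2 T (Set.mem_insert_of_mem _ hTmem) M (Set.mem_insert _ _) hTne
      r hr1 hrn
    apply hcross
    funext a b
    show T _ _ = M _ _
    rw [hTdef]
    beta_reduce
    have ha := a.isLt
    have hb := b.isLt
    simp only [Fin.coe_castLE, ha, hb, and_self, dif_pos]
    congr 1 <;> ext <;> simp <;> omega
  · -- Case A: no diagonal entry of index ≥ 1 is 1; then M 0 0 ≠ 1.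
    push_neg at hB
    have hM0 : M ⟨0, by omega⟩ ⟨0, by omega⟩ ≠ ⟨1, by omega⟩ := by
      intro h0
      apply hdiag
      refine mem_Snkq_of hq hn (fun i hi => ?_) (fun i hi => hB i hi)
      have : i = ⟨0, by omega⟩ := Fin.ext (by simp [hi])
      rw [this]; exact h0
    set T : Matrix (Fin n) (Fin n) (Fin q) := fun a b =>
      if (a : ℕ) = n - 1 ∧ (b : ℕ) = n - 1 then M ⟨0, by omega⟩ ⟨0, by omega⟩
      else if (a : ℕ) = 0 ∧ (b : ℕ) = 0 then ⟨1, by omega⟩ else ⟨0, by omega⟩ with hTdef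
    have hTmem : Matrix.diag T ∈ Snkq q n 1 hq := by
      refine mem_Snkq_of hq hn (fun i hi => ?_) (fun i hi => ?_)
      · show T i i = _
        rw [hTdef]
        beta_reduce
        have hh0 : ¬ ((i : ℕ) = n - 1 ∧ (i : ℕ) = n - 1) := by omega
        rw [if_neg hh0, if_pos ⟨hi, hi⟩]
      · show T i i ≠ _
        rw [hTdef]
        beta_reduce
        by_cases hin : (i : ℕ) = n - 1
        · simp only [hin, and_self, if_pos]; exact hM0
        · have h0 : ¬ ((i : ℕ) = n - 1 ∧ (i : ℕ) = n - 1) := by omega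
          have h1 : ¬ ((i : ℕ) = 0 ∧ (i : ℕ) = 0) := by omega
          simp only [h0, h1, if_neg, not_false_iff]
          intro hcon
          have := congrArg Fin.val hcon
          simp at this
    have hTne : M ≠ T := fun h => hdiag (h ▸ hTmem)
    have hcross := hC.2 M (Set.mem_insert _ _) T (Set.mem_insert_of_mem _ hTmem) hTne
      1 le_rfl (by omega)
    apply hcross
    funext a b
    have ha : (a : ℕ) = 0 := by omega
    have hb : (b : ℕ) = 0 := by omega
    show M _ _ = T _ _
    rw [hTdef]
    beta_reduce
    have h1 : n - 1 + (a : ℕ) = n - 1 := by omega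
    have h2 : n - 1 + (b : ℕ) = n - 1 := by omega
    simp only [h1, h2, and_self, if_pos]
    congr 1 <;> ext <;> simp <;> omega
end
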